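/- If additionally ρ is strictly monotone (ρ[Z] < ρ[Z'] whenever Z ≤ Z' componentwise and Z ≠ Z') and the set of simultaneous minimizers argmin_{x∈X} g(x) is nonempty, then argmin_{x∈X} g(x) = argmin_{x∈X} ρ[g(x)]. -/
import Mathlib

open Filter Topology

/-- A function lower semicontinuous on a compact set is bounded below on it. -/
lemma lsc_bddBelow_on_compact {m : ℕ} {S : Set (Fin m → ℝ)} (hS : IsCompact S)
    {f : (Fin m → ℝ) → ℝ} (hf : LowerSemicontinuousOn f S) : BddBelow (f '' S) := by
  by_contra hb
  have h : ∀ k : ℕ, ∃ x ∈ S, f x < -k := by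
    intro k
    rcases not_bddBelow_iff.1 hb (-k) with ⟨y, ⟨x, hx, rfl⟩, hy⟩
    exact ⟨x, hx, hy⟩
  choose u hu hfu using h
  obtain ⟨x₀, hx₀, φ, hφ, hlim⟩ := hS.tendsto_subseq hu
  have hlim' : Tendsto (fun k => u (φ k)) atTop (𝓝[S] x₀) := by
    rw [tendsto_nhdsWithin_iff]
    exact ⟨hlim, Eventually.of_forall fun k => hu _⟩
  have := (hf x₀ hx₀) (f x₀ - 1) (by linarith)
  have hev := hlim'.eventually this
  obtain ⟨k, hk1, hk2⟩ := ((hev.and (eventually_ge_atTop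
    (Nat.ceil (|f x₀| + 2)))).exists)
  have hφk : (Nat.ceil (|f x₀| + 2) : ℝ) ≤ φ k := by
    exact_mod_cast le_trans hk2 (hφ.le_apply)
  have h1 : |f x₀| + 2 ≤ (φ k : ℝ) := le_trans (Nat.le_ceil _) hφk
  have h2 : f (u (φ k)) < -(φ k : ℝ) := hfu (φ k)
  have := abs_le.1 (le_refl |f x₀|)
  nlinarith [neg_abs_le (f x₀), hk1]

/-- Sublevel sets of a lsc function on a closed set are closed. -/
lemma lsc_sublevel_closed {m : ℕ} {X : Set (Fin m → ℝ)} (hXcl : IsClosed X)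
    {f : (Fin m → ℝ) → ℝ} (hf : LowerSemicontinuousOn f X) (c : ℝ) :
    IsClosed {x ∈ X | f x ≤ c} := by
  rw [isClosed_iff_clusterPt]
  intro x hx
  have hxcl : x ∈ closure {x ∈ X | f x ≤ c} := mem_closure_iff_clusterPt.2 hx
  have hsub : {x ∈ X | f x ≤ c} ⊆ X := fun y hy => hy.1
  have hxX : x ∈ X := hXcl.closure_subset (closure_mono hsub hxcl)
  refine ⟨hxX, ?_⟩
  by_contra h
  push_neg at h
  have hev : ∀ᶠ y in 𝓝[X] x, c < f y := hf x hxX c h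
  have hne : (𝓝[{x ∈ X | f x ≤ c}] x).NeBot := mem_closure_iff_nhdsWithin_neBot.1 hxcl
  have hev' : ∀ᶠ y in 𝓝[{x ∈ X | f x ≤ c}] x, c < f y :=
    hev.filter_mono (nhdsWithin_mono _ hsub)
  have hmem : ∀ᶠ y in 𝓝[{x ∈ X | f x ≤ c}] x, f y ≤ c :=
    eventually_mem_nhdsWithin.mono fun y hy => hy.2
  obtain ⟨y, h1, h2⟩ := (hev'.and hmem).exists
  linarith

/-- If `ρ` is additionally strictly monotone and the set of simultaneous
minimizers is nonempty, then the two argmin sets coincide. -/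
theorem argmin_eq_risk_argmin_of_strict (n m : ℕ) (ρ : (Fin n → ℝ) → ℝ)
    (hconv : ∀ (Z Z' : Fin n → ℝ) (l : ℝ), 0 ≤ l → l ≤ 1 →
        ρ (fun i => l * Z i + (1 - l) * Z' i) ≤ l * ρ Z + (1 - l) * ρ Z')
    (hmono : ∀ Z Z' : Fin n → ℝ, (∀ i, Z i ≤ Z' i) → ρ Z ≤ ρ Z')
    (htrans : ∀ (Z : Fin n → ℝ) (c : ℝ), ρ (fun i => Z i + c) = ρ Z + c)
    (hstrict : ∀ Z Z' : Fin n → ℝ, (∀ i, Z i ≤ Z' i) → Z ≠ Z' → ρ Z < ρ Z')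
    (X : Set (Fin m → ℝ)) (hXne : X.Nonempty) (hXcl : IsClosed X)
    (g : Fin n → (Fin m → ℝ) → ℝ)
    (hlsc : ∀ i, LowerSemicontinuousOn (g i) X)
    (hlb : ∀ i c, Bornology.IsBounded {x ∈ X | g i x ≤ c})
    (hargne : {x ∈ X | ∀ i, g i x = sInf ((g i) '' X)}.Nonempty) :
    {x ∈ X | ∀ i, g i x = sInf ((g i) '' X)} =
      {x ∈ X | ρ (fun i => g i x) = sInf ((fun x => ρ (fun i => g i x)) '' X)} := by
  obtain ⟨xs, hxsX, hxsmin⟩ := hargne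
  -- each g i '' X is bounded below
  have hbdd : ∀ i, BddBelow ((g i) '' X) := by
    intro i
    set S := {x ∈ X | g i x ≤ g i xs} with hSdef
    have hScl : IsClosed S := lsc_sublevel_closed hXcl (hlsc i) _
    have hScpt : IsCompact S := Metric.isCompact_of_isClosed_isBounded hScl (hlb i (g i xs))
    obtain ⟨b, hb⟩ := lsc_bddBelow_on_compact hScpt ((hlsc i).mono (fun y hy => hy.1))
    have hbxs : b ≤ g i xs := hb ⟨xs, ⟨hxsX, le_refl _⟩, rfl⟩
    refine ⟨b, ?_⟩
    rintro y ⟨x, hxX, rfl⟩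
    by_cases hx : g i x ≤ g i xs
    · exact hb ⟨x, ⟨hxX, hx⟩, rfl⟩
    · linarith
  -- xs minimizes each g i on X
  have hxslow : ∀ i, ∀ x ∈ X, g i xs ≤ g i x := by
    intro i x hx
    rw [hxsmin i]
    exact csInf_le (hbdd i) ⟨x, hx, rfl⟩
  -- xs minimizes ρ ∘ g on X
  have hρleast : IsLeast ((fun x => ρ (fun i => g i x)) '' X) (ρ (fun i => g i xs)) := by
    constructor
    · exact ⟨xs, hxsX, rfl⟩
    · rintro y ⟨x, hxX, rfl⟩
      exact hmono _ _ (fun i => hxslow i x hxX)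
  have hρinf : sInf ((fun x => ρ (fun i => g i x)) '' X) = ρ (fun i => g i xs) :=
    hρleast.csInf_eq
  ext x
  simp only [Set.mem_setOf_eq]
  constructor
  · rintro ⟨hxX, hxmin⟩
    refine ⟨hxX, ?_⟩
    have : (fun i => g i x) = (fun i => g i xs) := by
      funext i; rw [hxmin i, hxsmin i]
    rw [this, hρinf]
  · rintro ⟨hxX, hρx⟩
    refine ⟨hxX, ?_⟩
    have heq : ρ (fun i => g i x) = ρ (fun i => g i xs) := by rw [hρx, hρinf]
    have hle : ∀ i, g i xs ≤ g i x := fun i => hxslow i x hxX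
    have hfun : (fun i => g i xs) = (fun i => g i x) := by
      by_contra hne
      exact absurd heq (ne_of_gt (hstrict _ _ hle hne))
    intro i
    rw [← hxsmin i, ← congrFun hfun i]
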